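/- arXiv:1510.08113 — 2 statements merged into one kernel-verified Lean document; each statement's English description precedes it below -/
import Mathlib

section
/- Let δ > 0 and l > 0. There exists L = L(l,δ) > 0, depending only on l and δ, such that the following holds for every δ-hyperbolic metric space X. Let x_0, x_1, …, x_m be points of X such that (a) for every i with 1 ≤ i ≤ m−1, (x_{i−1}, x_{i+1})_{x_i} ≤ l, and (b) for every i with 1 ≤ i ≤ m−2, d(x_i, x_{i+1}) ≥ L. Then for every i with 0 ≤ i ≤ m, the inequality (x_0, x_m)_{x_i} ≤ l + 5δ holds; moreover, for every p ∈ X there exists i with 0 ≤ i ≤ m−1 such that (x_{i+1}, x_i)_p ≤ (x_0, x_m)_p + 2l + 8δ. -/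
open Metric

universe u v

/-- The Gromov product `(y,z)_x = (d(y,x)+d(z,x)-d(y,z))/2`. -/
noncomputable def gp {X : Type u} [MetricSpace X] (x y z : X) : ℝ :=
  (dist y x + dist z x - dist y z) / 2

/-- `X` is `δ`-hyperbolic: the four point inequality. -/
def IsHyp (X : Type u) [MetricSpace X] (δ : ℝ) : Prop :=
  ∀ x y z t : X, min (gp t x y) (gp t y z) - δ ≤ gp t x z

/-- `γ` restricted to `[a,b]` is a `(1,l)`-quasi-geodesic. -/
def IsQG {X : Type u} [MetricSpace X] (l a b : ℝ) (γ : ℝ → X) : Prop :=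
  ∀ t ∈ Set.Icc a b, ∀ t' ∈ Set.Icc a b,
    dist (γ t) (γ t') ≤ |t - t'| ∧ |t - t'| ≤ dist (γ t) (γ t') + l

/-- Any two points of `X` are joined by a `(1,l)`-quasi-geodesic, for every `l > 0`. -/
def QGSpace (X : Type u) [MetricSpace X] : Prop :=
  ∀ x x' : X, ∀ l : ℝ, 0 < l →
    ∃ a b : ℝ, ∃ γ : ℝ → X, a ≤ b ∧ IsQG l a b γ ∧ γ a = x ∧ γ b = x'

/-- `Y` is `α`-quasi-convex. -/
def QConvex {X : Type u} [MetricSpace X] (α : ℝ) (Y : Set X) : Prop :=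
  ∀ x : X, ∀ y ∈ Y, ∀ y' ∈ Y, infDist x Y ≤ gp x y y' + α

/-- The hull of `Y`: the union of the images of all `(1,δ)`-quasi-geodesics defined on
compact intervals whose two endpoints lie in `Y`. -/
def hull {X : Type u} [MetricSpace X] (δ : ℝ) (Y : Set X) : Set X :=
  { z | ∃ a b : ℝ, ∃ γ : ℝ → X, a ≤ b ∧ IsQG δ a b γ ∧ γ a ∈ Y ∧ γ b ∈ Y ∧
      z ∈ γ '' Set.Icc a b }

/-- The `r`-neighborhood of a subset. -/
def nbhd {X : Type u} [MetricSpace X] (r : ℝ) (Z : Set X) : Set X :=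
  { x | infDist x Z ≤ r }

private lemma gp_comm {X : Type u} [MetricSpace X] (t y z : X) : gp t y z = gp t z y := by
  simp only [gp, dist_comm]; ring

private lemma gp_self_left {X : Type u} [MetricSpace X] (t z : X) : gp t t z = 0 := by
  simp [gp, dist_comm]

private lemma gp_self_right {X : Type u} [MetricSpace X] (t y : X) : gp t y t = 0 := by
  simp [gp, dist_comm]

private lemma gp_add {X : Type u} [MetricSpace X] (a b c : X) :
    gp a c b + gp b c a = dist a b := by
  simp only [gp, dist_comm]; ring

private lemma key_lemma {X : Type u} [MetricSpace X] (δ l : ℝ) (hδ : 0 < δ) (hl : 0 < l)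
    (hX : IsHyp X δ) (m : ℕ) (x : ℕ → X)
    (ha : ∀ i : ℕ, 1 ≤ i → i + 1 ≤ m → gp (x i) (x (i - 1)) (x (i + 1)) ≤ l)
    (hb : ∀ i : ℕ, 1 ≤ i → i + 2 ≤ m → 2*l + 4*δ ≤ dist (x i) (x (i + 1))) :
    ∀ j : ℕ, j + 1 ≤ m → gp (x j) (x 0) (x (j + 1)) ≤ l + δ := by
  intro j
  induction j with
  | zero => intro _; rw [gp_self_left]; linarith
  | succ n ih =>
    intro hn2
    rcases Nat.eq_zero_or_pos n with h0 | hpos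
    · subst h0
      have := ha 1 le_rfl (by omega)
      norm_num at this
      linarith
    · have hih := ih (by omega)
      have hd := hb n hpos (by omega)
      have hid := gp_add (x n) (x (n+1)) (x 0)
      -- gp (x n) (x 0) (x (n+1)) + gp (x (n+1)) (x 0) (x n) = dist (x n) (x (n+1))
      have hlarge : l + 3*δ ≤ gp (x (n+1)) (x 0) (x n) := by linarith
      have hal : gp (x (n+1)) (x n) (x (n+2)) ≤ l := by
        have := ha (n+1) (by omega) (by omega)
        simpa using this
      have hhyp := hX (x n) (x 0) (x (n+2)) (x (n+1))
      have hcm : gp (x (n+1)) (x n) (x 0) = gp (x (n+1)) (x 0) (x n) := gp_comm _ _ _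
      rcases le_total (gp (x (n+1)) (x n) (x 0)) (gp (x (n+1)) (x 0) (x (n+2))) with h | h
      · rw [min_eq_left h] at hhyp
        have : gp (x (n+1)) (x 0) (x (n+1+1)) = gp (x (n+1)) (x 0) (x (n+2)) := rfl
        linarith
      · rw [min_eq_right h] at hhyp
        have : gp (x (n+1)) (x 0) (x (n+1+1)) = gp (x (n+1)) (x 0) (x (n+2)) := rfl
        linarith

/-- Stability of discrete quasi-geodesics. -/
theorem stability_discrete_quasi_geodesics (δ l : ℝ) (hδ : 0 < δ) (hl : 0 < l) :
    ∃ L : ℝ, 0 < L ∧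
      ∀ (X : Type u) [MetricSpace X], IsHyp X δ →
        ∀ (m : ℕ) (x : ℕ → X), 1 ≤ m →
          (∀ i : ℕ, 1 ≤ i → i + 1 ≤ m → gp (x i) (x (i - 1)) (x (i + 1)) ≤ l) →
          (∀ i : ℕ, 1 ≤ i → i + 2 ≤ m → L ≤ dist (x i) (x (i + 1))) →
          (∀ i : ℕ, i ≤ m → gp (x i) (x 0) (x m) ≤ l + 5 * δ) ∧
          (∀ p : X, ∃ i : ℕ, i + 1 ≤ m ∧
            gp p (x (i + 1)) (x i) ≤ gp p (x 0) (x m) + 2 * l + 8 * δ) := by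

  classical
  refine ⟨2*l + 4*δ, by linarith, ?_⟩
  intro X _ hX m x hm ha hb
  -- forward bound
  have hkey : ∀ j : ℕ, j + 1 ≤ m → gp (x j) (x 0) (x (j + 1)) ≤ l + δ :=
    key_lemma δ l hδ hl hX m x ha hb
  -- backward bound, via the reversed chain
  have hkeyrev : ∀ j : ℕ, j + 1 ≤ m →
      gp (x (m - j)) (x (m - 0)) (x (m - (j + 1))) ≤ l + δ := by
    refine key_lemma δ l hδ hl hX m (fun i => x (m - i)) ?_ ?_
    · intro i h1 h2
      have e1 : m - (i - 1) = m - i + 1 := by omega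
      have e2 : m - (i + 1) = m - i - 1 := by omega
      rw [e1, e2, gp_comm]
      exact ha (m - i) (by omega) (by omega)
    · intro i h1 h2
      have e2 : m - (i + 1) = m - i - 1 := by omega
      have e3 : m - i - 1 + 1 = m - i := by omega
      rw [e2, dist_comm]
      have := hb (m - i - 1) (by omega) (by omega)
      rwa [e3] at this
  have hB : ∀ i : ℕ, 1 ≤ i → i ≤ m → gp (x i) (x m) (x (i - 1)) ≤ l + δ := by
    intro i h1 h2
    have h := hkeyrev (m - i) (by omega)
    have e1 : m - (m - i) = i := by omega
    have e2 : m - (m - i + 1) = i - 1 := by omega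
    have e3 : m - 0 = m := by omega
    rwa [e1, e2, e3] at h
  -- Claim 1
  have hC1 : ∀ i : ℕ, i ≤ m → gp (x i) (x 0) (x m) ≤ l + 5 * δ := by
    intro i him
    rcases Nat.eq_zero_or_pos i with rfl | hi1
    · rw [gp_self_left]; linarith
    rcases eq_or_lt_of_le him with rfl | hilt
    · rw [gp_self_right]; linarith
    rcases le_or_gt (i + 2) m with h2 | h2
    · -- middle case
      have hA := hkey i (by omega)
      have hBv := hB (i + 1) (by omega) (by omega)
      have e : i + 1 - 1 = i := by omega
      rw [e] at hBv
      have hid := gp_add (x i) (x (i + 1)) (x m)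
      have hd := hb i hi1 h2
      have hQ : l + 3*δ ≤ gp (x i) (x m) (x (i + 1)) := by linarith
      have hhyp := hX (x 0) (x m) (x (i + 1)) (x i)
      rcases le_total (gp (x i) (x 0) (x m)) (gp (x i) (x m) (x (i + 1))) with h | h
      · rw [min_eq_left h] at hhyp; linarith
      · rw [min_eq_right h] at hhyp; linarith
    · -- last case : i + 1 = m
      have him1 : i + 1 = m := by omega
      rcases le_or_gt 2 i with hi2 | hi2
      · have hA := hkey (i - 1) (by omega)
        have e : i - 1 + 1 = i := by omega
        rw [e] at hA
        have hd := hb (i - 1) (by omega) (by omega)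
        rw [e] at hd
        have hid := gp_add (x (i - 1)) (x i) (x 0)
        have hQ : l + 3*δ ≤ gp (x i) (x 0) (x (i - 1)) := by linarith
        have hal : gp (x i) (x (i - 1)) (x m) ≤ l := by
          have := ha i hi1 (by omega)
          rwa [him1] at this
        have hhyp := hX (x m) (x 0) (x (i - 1)) (x i)
        have hc1 : gp (x i) (x m) (x 0) = gp (x i) (x 0) (x m) := gp_comm _ _ _
        have hc2 : gp (x i) (x m) (x (i - 1)) = gp (x i) (x (i - 1)) (x m) := gp_comm _ _ _
        have hc3 : gp (x i) (x 0) (x (i - 1)) = gp (x i) (x (i - 1)) (x 0) := gp_comm _ _ _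
        rcases le_total (gp (x i) (x m) (x 0)) (gp (x i) (x 0) (x (i - 1))) with h | h
        · rw [min_eq_left h] at hhyp; linarith
        · rw [min_eq_right h] at hhyp; linarith
      · -- i = 1, m = 2
        have hi : i = 1 := by omega
        have hm2 : m = 2 := by omega
        subst hi; subst hm2
        have := ha 1 le_rfl (by omega)
        norm_num at this ⊢
        linarith
  refine ⟨hC1, ?_⟩
  -- Claim 2
  intro p
  have hex : ∃ j : ℕ, 1 ≤ j ∧ j ≤ m ∧ gp p (x 0) (x j) ≤ gp p (x 0) (x m) + δ :=
    ⟨m, hm, le_rfl, by linarith⟩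
  obtain ⟨hj1, hjm, hjA⟩ := Nat.find_spec hex
  set j := Nat.find hex with hj
  refine ⟨j - 1, by omega, ?_⟩
  have hij : j - 1 + 1 = j := by omega
  rw [hij]
  have hBi : gp p (x (j - 1)) (x m) ≤ gp p (x 0) (x m) + δ := by
    rcases Nat.eq_zero_or_pos (j - 1) with h0 | h1
    · rw [h0]; linarith
    · have hnot := Nat.find_min hex (m := j - 1) (by omega)
      push_neg at hnot
      have hgt := hnot h1 (by omega)
      have hhyp := hX (x 0) (x (j - 1)) (x m) p
      rcases le_total (gp p (x 0) (x (j - 1))) (gp p (x (j - 1)) (x m)) with h | h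
      · rw [min_eq_left h] at hhyp; linarith
      · rw [min_eq_right h] at hhyp; linarith
  have hC := hC1 (j - 1) (by omega)
  have htri := dist_triangle (x 0) (x (j - 1)) (x j)
  have hc1 : dist (x j) (x (j - 1)) = dist (x (j - 1)) (x j) := dist_comm _ _
  have hc2 : dist (x m) (x (j - 1)) = dist (x (j - 1)) (x m) := dist_comm _ _
  simp only [gp] at hjA hBi hC ⊢
  linarith
end

section
/- Let δ > 0. There exists σ₀ > 0, depending only on δ, such that the following holds. Let X be a δ-hyperbolic metric space in which, for all x,x' ∈ X and every l > 0, there is a (1,l)-quasi-geodesic joining x to x'; let G act on X by isometries, let σ ≥ σ₀, let R be a σ-rotation family, and let (W,N,V) be an extended windmill with W nonempty and L = ⟨N ∪ K_V⟩. Set A = { v ∈ v(R)∖V : d(v,W) ≤ 3σ/10 }, assume A is nonempty, and let S = Hull(W ∪ A). Then every apex v ∈ v(R) with d(v,S) ≤ σ/5 belongs to V ∪ A. -/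
open Metric

universe u v

/-- A `σ`-rotation family: a nonempty set of pairs (rotation subgroup, apex). -/
def IsRotFam {X : Type u} [MetricSpace X] {G : Type v} [Group G] [MulAction G X]
    (σ : ℝ) (R : Set (Subgroup G × X)) : Prop :=
  R.Nonempty ∧
  (∀ p ∈ R, ∀ x : X, dist x p.2 ≤ σ / 10 → ∀ h ∈ p.1, h ≠ 1 →
      dist (h • x) x = 2 * dist p.2 x) ∧
  (∀ p ∈ R, ∀ q ∈ R, p ≠ q → σ ≤ dist p.2 q.2) ∧
  (∀ g : G, ∀ p ∈ R, (Subgroup.map (MulAut.conj g).toMonoidHom p.1, g • p.2) ∈ R)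

/-- The set of apices of a rotation family. -/
def apices {G : Type v} {X : Type u} [Group G] (R : Set (Subgroup G × X)) : Set X :=
  Prod.snd '' R

/-- The subgroup `K_Y` generated by all rotation subgroups whose apex lies in `Y`. -/
def rotSub {G : Type v} {X : Type u} [Group G] (R : Set (Subgroup G × X)) (Y : Set X) :
    Subgroup G :=
  ⨆ p ∈ { q ∈ R | q.2 ∈ Y }, p.1

/-- The orbit set `P • Z`. -/
def orbSet {G : Type v} {X : Type u} [Group G] [MulAction G X] (P : Subgroup G)
    (Z : Set X) : Set X :=
  { x | ∃ g ∈ P, ∃ z ∈ Z, x = g • z }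

/-- An extended windmill `(W, N, V)` for the rotation family `R`. -/
def IsExtWindmill {X : Type u} [MetricSpace X] {G : Type v} [Group G] [MulAction G X]
    (δ : ℝ) (R : Set (Subgroup G × X)) (W : Set X) (N : Subgroup G) (V : Set X) : Prop :=
  V ⊆ apices R ∧
  QConvex (2 * δ) W ∧
  (∀ g ∈ N ⊔ rotSub R V, ∀ w ∈ W, g • w ∈ W) ∧
  (∀ g ∈ N ⊔ rotSub R V, ∀ v ∈ V, g • v ∈ V) ∧
  (∀ p ∈ R, p.2 ∉ V → ∀ h ∈ p.1, h ≠ 1 → ∀ x ∈ W, ∀ x' ∈ W,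
      gp p.2 x (h • x') ≤ 100 * δ) ∧
  (∀ p ∈ R, p.2 ∉ V → ∀ g ∈ N ⊔ rotSub R V, g • p.2 = p.2 → g = 1)

lemma gp_symm {X : Type u} [MetricSpace X] (x y z : X) : gp x y z = gp x z y := by
  unfold gp; rw [dist_comm y z]; ring

/-- Apices in the `σ/5`-neighborhood of the sail belong to `V ∪ A`. -/
theorem windmill_apices_in_neighborhood_of_sail (δ : ℝ) (hδ : 0 < δ) :
    ∃ σ₀ : ℝ, 0 < σ₀ ∧
      ∀ (X : Type u) [MetricSpace X] (G : Type v) [Group G] [MulAction G X],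
        (∀ g : G, Isometry fun x : X => g • x) →
        IsHyp X δ → QGSpace X →
        ∀ σ : ℝ, σ₀ ≤ σ → ∀ R : Set (Subgroup G × X), IsRotFam σ R →
          ∀ (W : Set X) (N : Subgroup G) (V : Set X),
            W.Nonempty → IsExtWindmill δ R W N V →
            ∀ A : Set X,
              A = { v | v ∈ apices R ∧ v ∉ V ∧ infDist v W ≤ 3 * σ / 10 } →
              A.Nonempty →
              ∀ S : Set X, S = hull δ (W ∪ A) →
                ∀ v ∈ apices R, infDist v S ≤ σ / 5 → v ∈ V ∪ A := by
  refine ⟨100 * δ, by linarith, ?_⟩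
  intro X _ G _ _ _hIso hHyp hQG σ hσ R hR W N V hWne hEW A hA hAne S hS v hv hvS
  by_cases hvV : v ∈ V
  · exact Or.inl hvV
  refine Or.inr ?_
  rw [hA]
  refine ⟨hv, hvV, ?_⟩
  by_contra hcon
  push_neg at hcon
  have hQC : QConvex (2 * δ) W := hEW.2.1
  -- S is nonempty
  have hSne : S.Nonempty := by
    obtain ⟨y₀, hy₀⟩ := hAne
    obtain ⟨a, b, γ, hab, hqg, hga, hgb⟩ := hQG y₀ y₀ δ hδ
    refine ⟨y₀, ?_⟩
    rw [hS]
    exact ⟨a, b, γ, hab, hqg, hga ▸ Or.inr hy₀, hgb ▸ Or.inr hy₀,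
      ⟨a, ⟨le_refl a, hab⟩, hga⟩⟩
  have hlt : infDist v S < σ / 5 + δ := lt_of_le_of_lt hvS (by linarith)
  obtain ⟨z, hzS, hzd⟩ := (Metric.infDist_lt_iff hSne).mp hlt
  rw [hS] at hzS
  obtain ⟨a, b, γ, hab, hqg, hya, hyb, t, ht, hzt⟩ := hzS
  -- key endpoint estimate
  have key : ∀ u ∈ W ∪ A, ∃ w ∈ W, 3 * σ / 10 - δ ≤ gp v u w := by
    intro u hu
    rcases hu with huW | huA
    · refine ⟨u, huW, ?_⟩
      have h1 : infDist v W ≤ dist v u := Metric.infDist_le_dist_of_mem huW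
      have h2 : gp v u u = dist u v := by unfold gp; rw [dist_self]; ring
      rw [h2, dist_comm]
      linarith
    · rw [hA] at huA
      obtain ⟨huAp, huV, huW⟩ := huA
      have hune : u ≠ v := by
        intro h; rw [h] at huW; linarith
      obtain ⟨p, hp, hpv⟩ := hv
      obtain ⟨q, hq, hqu⟩ := huAp
      have hpq : p ≠ q := fun h => hune (by rw [← hqu, ← h, hpv])
      have hdist : σ ≤ dist v u := by
        have := hR.2.2.1 p hp q hq hpq
        rwa [hpv, hqu] at this
      obtain ⟨w, hwW, hwd⟩ := (Metric.infDist_lt_iff hWne).mp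
        (lt_of_le_of_lt huW (by linarith : 3 * σ / 10 < 3 * σ / 10 + δ))
      refine ⟨w, hwW, ?_⟩
      have htri : dist u v ≤ dist u w + dist w v := dist_triangle u w v
      have hvu : dist v u = dist u v := dist_comm v u
      unfold gp
      linarith
  obtain ⟨w, hwW, hw⟩ := key (γ a) hya
  obtain ⟨w', hw'W, hw'⟩ := key (γ b) hyb
  -- quasi-convexity lower bound
  have hqc : infDist v W ≤ gp v w w' + 2 * δ := hQC v w hwW w' hw'W
  -- hyperbolicity chains
  have hmin1 : 3 * σ / 10 - 2 * δ ≤ min (gp v w w') (gp v w' (γ b)) := by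
    refine le_min (by linarith) ?_
    rw [gp_symm]
    linarith
  have hyp1 := hHyp w w' (γ b) v
  have hmin2 : 3 * σ / 10 - 3 * δ ≤ min (gp v (γ a) w) (gp v w (γ b)) := by
    refine le_min (by linarith) ?_
    have := le_trans hmin1 (min_le_min (le_refl _) (le_refl _))
    linarith [le_min_iff.mp hmin1]
  have hyp2 := hHyp (γ a) w (γ b) v
  -- upper bound along the quasi-geodesic
  obtain ⟨hta, htb⟩ := ht
  have hqg_ab := hqg a ⟨le_refl a, hab⟩ b ⟨hab, le_refl b⟩
  have h1 := (hqg a ⟨le_refl a, hab⟩ t ⟨hta, htb⟩).1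
  have h2 := (hqg t ⟨hta, htb⟩ b ⟨hab, le_refl b⟩).1
  have habs1 : |a - t| = t - a := by rw [abs_sub_comm]; exact abs_of_nonneg (by linarith)
  have habs2 : |t - b| = b - t := by rw [abs_sub_comm]; exact abs_of_nonneg (by linarith)
  have habs3 : |a - b| = b - a := by rw [abs_sub_comm]; exact abs_of_nonneg (by linarith)
  rw [habs1, hzt] at h1
  rw [habs2, hzt] at h2
  rw [habs3] at hqg_ab
  have htri1 : dist (γ a) v ≤ dist (γ a) z + dist z v := dist_triangle _ _ _
  have htri2 : dist (γ b) v ≤ dist (γ b) z + dist z v := dist_triangle _ _ _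
  have hzb : dist (γ b) z = dist z (γ b) := dist_comm _ _
  have hvz : dist v z = dist z v := dist_comm v z
  have hup : gp v (γ a) (γ b) ≤ dist z v + δ / 2 := by
    unfold gp
    linarith [hqg_ab.2]
  have hlow : 3 * σ / 10 - 4 * δ ≤ gp v (γ a) (γ b) := by
    have := hHyp (γ a) w (γ b) v
    linarith [le_min_iff.mp hmin2]
  linarith
end
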